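/- Let N ≥ 2 be an integer, r > 0, Γ ∈ ℝ \ {0} and γ ∈ ℝ. Define the angular speed a = Γ(N − 1 + 2γ)/(4πr²) and, for j = 1,…,N, the trajectories z_j(t) = r(cos(2πj/N + a t), sin(2πj/N + a t)), together with z_{N+1}(t) = (0,0), with circulations Γ_j = Γ for 1 ≤ j ≤ N and Γ_{N+1} = γΓ. Then for every t ∈ ℝ and every j ∈ {1,…,N+1}, the points z_1(t),…,z_{N+1}(t) are pairwise distinct and z_j'(t) = Σ_{l=1, l≠j}^{N+1} (Γ_l/(2π)) · (z_j(t) − z_l(t))^⊥ / |z_j(t) − z_l(t)|², i.e. the uniformly rotating polygon with a central vortex is an exact solution of the Helmholtz–Kirchhoff point-vortex system. -/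

import Mathlib

/-!
In complex notation the velocity induced at `z_j` by the vortex at `z_l` is
`(Γ_l / 2π) i / conj (z_j - z_l)`. Multiplying a configuration by `c ∈ ℂ` divides every velocity
by `conj c`, so it suffices to show that the unit polygon `ζ^k` (with `ζ` a primitive `N`-th root
of unity) together with the centre `0` has velocity `Γ (N - 1 + 2γ) / (4π) · i z_j`. At the centre
this is `Σ ζ^k = 0`; at a vertex it is `Σ_{k=1}^{N-1} 1 / (1 - ζ^k) = (N - 1) / 2`, obtained by
pairing `k` with `N - k` via `1 / (1 - x) + 1 / (1 - x⁻¹) = 1`. Since `i z_j` is the velocity of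
uniform rotation, the rotating polygon solves the system.
-/

open Real Complex ComplexConjugate Finset

theorem pow_val_add_of_pow_eq_one {M : Type*} [Monoid M] {ζ : M} {N : ℕ} (h : ζ ^ N = 1)
    (a b : Fin N) : ζ ^ ((a + b : Fin N) : ℕ) = ζ ^ (a : ℕ) * ζ ^ (b : ℕ) := by
  rw [Fin.val_add, ← pow_add]
  conv_rhs => rw [← Nat.mod_add_div ((a : ℕ) + b) N, pow_add, pow_mul, h, one_pow, mul_one]

section Field

variable {K : Type*} [Field K] {ζ : K} {N : ℕ}

theorem inv_sub_inv_inv {u v : K} (hu : u ≠ 0) (hv : v ≠ 0) :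
    (u⁻¹ - v⁻¹)⁻¹ = u * (1 - u / v)⁻¹ := by
  rw [inv_sub_inv hu hv, inv_div, one_sub_div hv, inv_div, mul_div_assoc]

theorem inv_one_sub_add_inv_one_sub_inv {x : K} (h0 : x ≠ 0) (h1 : x ≠ 1) :
    (1 - x)⁻¹ + (1 - x⁻¹)⁻¹ = 1 := by
  have : x - 1 ≠ 0 := sub_ne_zero.2 h1
  field_simp
  ring

theorem sum_fin_div_pow_eq_sum_fin_pow [NeZero N] {M : Type*} [AddCommMonoid M]
    (h : ζ ^ N = 1) (j : Fin N) (f : K → M) :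
    ∑ i : Fin N, f (ζ ^ (j : ℕ) / ζ ^ (i : ℕ)) = ∑ k : Fin N, f (ζ ^ (k : ℕ)) := by
  have hζ : ζ ≠ 0 := by rintro rfl; simp [zero_pow (NeZero.ne N)] at h
  refine Fintype.sum_equiv (Equiv.subLeft j) _ _ fun i => congrArg f ?_
  rw [div_eq_iff (pow_ne_zero _ hζ), ← pow_val_add_of_pow_eq_one h, Equiv.subLeft_apply,
    sub_add_cancel]

theorem IsPrimitiveRoot.two_mul_sum_inv_one_sub_pow [NeZero N] (hζ : IsPrimitiveRoot ζ N) :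
    2 * ∑ k : Fin N, (1 - ζ ^ (k : ℕ))⁻¹ = N - 1 := by
  have hζ0 := hζ.ne_zero (NeZero.ne N)
  -- the `k = 0` terms are `0⁻¹ = 0`
  have hpair (k : Fin N) :
      (1 - ζ ^ (k : ℕ))⁻¹ + (1 - (ζ ^ (k : ℕ))⁻¹)⁻¹ = 1 - if k = 0 then 1 else 0 := by
    split_ifs with hk
    · simp [hk]
    · rw [sub_zero]
      refine inv_one_sub_add_inv_one_sub_inv (pow_ne_zero _ hζ0) fun h => hk (Fin.ext ?_)
      exact hζ.pow_inj k.isLt (NeZero.pos N) (h.trans (pow_zero ζ).symm)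
  rw [two_mul]
  nth_rw 2 [← sum_fin_div_pow_eq_sum_fin_pow hζ.pow_eq_one 0 (fun x => (1 - x)⁻¹)]
  simp [one_div, ← sum_add_distrib, hpair, sum_sub_distrib]

end Field

section PointVortex

variable {ι : Type*} [Fintype ι]

/-- `(Γ / 2π) i / conj u` is `(Γ / 2π) u^⊥ / |u|²` in complex notation; the term `l = j`
vanishes because `0⁻¹ = 0`. -/
noncomputable def pointVortexVelocity (Γ : ι → ℝ) (w : ι → ℂ) (j : ι) : ℂ :=
  ∑ l, Γ l / (2 * π) * I / conj (w j - w l)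

theorem equivRealProdCLM_mul_I_div_conj (c : ℝ) (u : ℂ) :
    equivRealProdCLM (c * I / conj u) = (c / (u.re ^ 2 + u.im ^ 2)) • (-u.im, u.re) := by
  simp [div_re, div_im, normSq_apply]
  constructor <;> ring

theorem equivRealProdCLM_pointVortexVelocity [DecidableEq ι] (Γ : ι → ℝ) (w : ι → ℂ) (j : ι) :
    equivRealProdCLM (pointVortexVelocity Γ w j) =
      ∑ l ∈ univ.erase j,
        (Γ l / (2 * π) / (((w j).re - (w l).re) ^ 2 + ((w j).im - (w l).im) ^ 2)) •
          (-((w j).im - (w l).im), (w j).re - (w l).re) := by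
  rw [pointVortexVelocity, ← sum_erase univ (a := j) (by simp), map_sum]
  refine sum_congr rfl fun l _ => ?_
  have := equivRealProdCLM_mul_I_div_conj (Γ l / (2 * π)) (w j - w l)
  push_cast at this
  simpa using this

theorem HasDerivAt.equivRealProdCLM_of_pointVortexVelocity [DecidableEq ι] {Γ : ι → ℝ}
    {w : ι → ℝ → ℂ} {j : ι} {t : ℝ}
    (h : HasDerivAt (w j) (pointVortexVelocity Γ (fun l => w l t) j) t) :
    HasDerivAt (fun s => equivRealProdCLM (w j s))
      (∑ l ∈ univ.erase j,
        (Γ l / (2 * π) /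
            (((w j t).re - (w l t).re) ^ 2 + ((w j t).im - (w l t).im) ^ 2)) •
          (-((w j t).im - (w l t).im), (w j t).re - (w l t).re)) t := by
  rw [← equivRealProdCLM_pointVortexVelocity Γ (fun l => w l t) j]
  exact equivRealProdCLM.hasFDerivAt.comp_hasDerivAt t h

theorem pointVortexVelocity_const_mul (Γ : ι → ℝ) (w : ι → ℂ) (c : ℂ) (j : ι) :
    pointVortexVelocity Γ (fun l => c * w l) j = pointVortexVelocity Γ w j / conj c := by
  simp only [pointVortexVelocity, sum_div, ← mul_sub, map_mul, div_mul_eq_div_div_swap]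

end PointVortex

section Polygon

def polygonWithCenter {M : Type*} [MonoidWithZero M] (N : ℕ) (ζ : M) : Fin (N + 1) → M :=
  Fin.snoc (fun i : Fin N => ζ ^ (i : ℕ)) 0

theorem IsPrimitiveRoot.polygonWithCenter_injective {M : Type*} [CommMonoidWithZero M]
    [Nontrivial M] {ζ : M} {N : ℕ} (hζ : IsPrimitiveRoot ζ N) :
    Function.Injective (polygonWithCenter N ζ) := by
  have hζ0 (i : Fin N) : ζ ^ (i : ℕ) ≠ 0 :=
    ((hζ.isUnit (Nat.pos_iff_ne_zero.1 i.pos)).pow _).ne_zero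
  intro j l hjl
  induction j using Fin.lastCases <;> induction l using Fin.lastCases <;>
    simp only [polygonWithCenter, Fin.snoc_castSucc, Fin.snoc_last] at hjl
  · rfl
  · exact absurd hjl.symm (hζ0 _)
  · exact absurd hjl (hζ0 _)
  · exact congrArg _ (Fin.ext (hζ.pow_inj (Fin.is_lt _) (Fin.is_lt _) hjl))

theorem IsPrimitiveRoot.pointVortexVelocity_polygonWithCenter {N : ℕ} (hN : 2 ≤ N) {ζ : ℂ}
    (hζ : IsPrimitiveRoot ζ N) (Γ γ : ℝ) (j : Fin (N + 1)) :
    pointVortexVelocity (Fin.snoc (fun _ => Γ) (γ * Γ)) (polygonWithCenter N ζ) j =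
      Γ * (N - 1 + 2 * γ) / (4 * π) * I * polygonWithCenter N ζ j := by
  have : NeZero N := ⟨by omega⟩
  have hζ0 : ζ ≠ 0 := hζ.ne_zero (NeZero.ne N)
  have hconj (k : ℕ) : conj (ζ ^ k) = (ζ ^ k)⁻¹ := by
    rw [map_pow, ← inv_eq_conj (hζ.norm'_eq_one (NeZero.ne N)), inv_pow]
  induction j using Fin.lastCases with
  | last =>
    have hsum : ∑ i : Fin N, ζ ^ (i : ℕ) = 0 := by
      rw [Fin.sum_univ_eq_sum_range (ζ ^ ·), hζ.geom_sum_eq_zero (by omega)]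
    simp [pointVortexVelocity, Fin.sum_univ_castSucc, polygonWithCenter, hconj, div_neg,
      div_inv_eq_mul, ← mul_sum, hsum]
  | cast j =>
    have hS := hζ.two_mul_sum_inv_one_sub_pow
    rw [← sum_fin_div_pow_eq_sum_fin_pow hζ.pow_eq_one j (fun x => (1 - x)⁻¹)] at hS
    simp only [div_eq_mul_inv] at hS
    -- on the unit circle `conj = (·)⁻¹`, so each term becomes a multiple of a summand of `hS`
    simp only [pointVortexVelocity, Fin.sum_univ_castSucc, polygonWithCenter, Fin.snoc_castSucc,
      Fin.snoc_last, map_sub, map_zero, sub_zero, hconj, div_eq_mul_inv, inv_inv,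
      inv_sub_inv_inv (pow_ne_zero _ hζ0) (pow_ne_zero _ hζ0)]
    rw [← mul_sum, ← mul_sum]
    push_cast
    linear_combination (Γ / (4 * π) * I * ζ ^ (j : ℕ)) * hS

theorem IsPrimitiveRoot.pointVortexVelocity_const_mul_polygonWithCenter {N : ℕ} (hN : 2 ≤ N)
    {ζ : ℂ} (hζ : IsPrimitiveRoot ζ N) (Γ γ : ℝ) (c : ℂ) (j : Fin (N + 1)) :
    pointVortexVelocity (Fin.snoc (fun _ => Γ) (γ * Γ)) (fun l => c * polygonWithCenter N ζ l) j =
      Γ * (N - 1 + 2 * γ) / (4 * π * ‖c‖ ^ 2) * I * (c * polygonWithCenter N ζ j) := by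
  rw [pointVortexVelocity_const_mul, hζ.pointVortexVelocity_polygonWithCenter hN,
    div_eq_mul_inv, inv_def, conj_conj, normSq_conj, normSq_eq_norm_sq]
  push_cast
  ring

end Polygon

theorem hasDerivAt_ofReal_mul_exp_affine_mul (r a θ : ℝ) (w : ℂ) (t : ℝ) :
    HasDerivAt (fun s : ℝ => r * cexp (↑(a * s + θ) * I) * w)
      (a * I * (r * cexp (↑(a * t + θ) * I) * w)) t := by
  have hθ : HasDerivAt (fun s : ℝ => ((a * s + θ : ℝ) : ℂ)) a t := by
    simpa using (((hasDerivAt_id t).const_mul a).add_const θ).ofReal_comp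
  exact (((hθ.mul_const I).cexp.const_mul (r : ℂ)).mul_const w).congr_deriv (by ring)

theorem equivRealProdCLM_ofReal_mul_exp_mul_exp_pow (r θ φ : ℝ) (k : ℕ) :
    equivRealProdCLM (r * cexp (↑θ * I) * cexp (↑φ * I) ^ k) =
      (r * Real.cos (θ + k * φ), r * Real.sin (θ + k * φ)) := by
  rw [← Complex.exp_nat_mul, mul_assoc, ← Complex.exp_add,
    show (θ : ℂ) * I + k * (φ * I) = ↑(θ + k * φ) * I by push_cast; ring,
    equivRealProdCLM_apply, re_ofReal_mul, im_ofReal_mul, exp_ofReal_mul_I_re,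
    exp_ofReal_mul_I_im]

theorem equivRealProdCLM_mul_polygonWithCenter_exp (N : ℕ) (r θ : ℝ) (j : Fin (N + 1)) :
    equivRealProdCLM (r * cexp (↑(θ + 2 * π / N) * I) *
        polygonWithCenter N (cexp (↑(2 * π / N) * I)) j) =
      if (j : ℕ) < N then
        (r * Real.cos (2 * π * ((j : ℕ) + 1) / N + θ),
          r * Real.sin (2 * π * ((j : ℕ) + 1) / N + θ))
      else (0, 0) := by
  induction j using Fin.lastCases with
  | last => simp [polygonWithCenter]
  | cast i =>
    simp only [Fin.val_castSucc, i.isLt, if_true, polygonWithCenter, Fin.snoc_castSucc,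
      equivRealProdCLM_ofReal_mul_exp_mul_exp_pow]
    congr 3 <;> ring

theorem polygon_with_central_vortex_solves_point_vortex_system
    (N : ℕ) (hN : 2 ≤ N) (r Γ γ : ℝ) (hr : 0 < r)
    (a : ℝ) (ha : a = Γ * ((N : ℝ) - 1 + 2 * γ) / (4 * π * r ^ 2))
    (z : Fin (N + 1) → ℝ → ℝ × ℝ)
    (hz : ∀ (j : Fin (N + 1)) (t : ℝ),
      z j t =
        if (j : ℕ) < N then
          (r * Real.cos (2 * π * ((j : ℕ) + 1) / N + a * t),
           r * Real.sin (2 * π * ((j : ℕ) + 1) / N + a * t))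
        else (0, 0))
    (Γv : Fin (N + 1) → ℝ)
    (hΓv : ∀ j : Fin (N + 1), Γv j = if (j : ℕ) < N then Γ else γ * Γ) :
    ∀ t : ℝ,
      (∀ j l : Fin (N + 1), j ≠ l → z j t ≠ z l t) ∧
      (∀ j : Fin (N + 1),
        HasDerivAt (z j)
          (∑ l ∈ Finset.univ.erase j,
            ((Γv l / (2 * π)) /
              (((z j t).1 - (z l t).1) ^ 2 + ((z j t).2 - (z l t).2) ^ 2)) •
            (-((z j t).2 - (z l t).2), (z j t).1 - (z l t).1)) t) := by
  intro t
  set ζ := cexp (↑(2 * π / N) * I)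
  have hζ : IsPrimitiveRoot ζ N := by
    convert isPrimitiveRoot_exp N (by omega) using 2
    push_cast
    ring
  set c : ℝ → ℂ := fun s => r * cexp (↑(a * s + 2 * π / N) * I)
  have hzc (j : Fin (N + 1)) (s : ℝ) : z j s = equivRealProdCLM (c s * polygonWithCenter N ζ j) :=
    (hz j s).trans (equivRealProdCLM_mul_polygonWithCenter_exp N r (a * s) j).symm
  have hΓv' : Γv = Fin.snoc (fun _ => Γ) (γ * Γ) := by
    ext j
    induction j using Fin.lastCases <;> simp [hΓv]
  have hc : ‖c t‖ = r := by
    rw [norm_mul, norm_real, norm_exp_ofReal_mul_I, mul_one, Real.norm_of_nonneg hr.le]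
  refine ⟨fun j l hjl hzjl => hjl (hζ.polygonWithCenter_injective ?_), fun j => ?_⟩
  · rwa [hzc, hzc, equivRealProdCLM.injective.eq_iff,
      mul_right_inj' (norm_ne_zero_iff.1 (hc ▸ hr.ne'))] at hzjl
  have hvel : HasDerivAt (fun s => c s * polygonWithCenter N ζ j)
      (pointVortexVelocity Γv (fun l => c t * polygonWithCenter N ζ l) j) t := by
    have ha' : (Γ * (N - 1 + 2 * γ) / (4 * π * r ^ 2) : ℂ) = a := by simp [ha]
    rw [hΓv', hζ.pointVortexVelocity_const_mul_polygonWithCenter hN, hc, ha']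
    exact hasDerivAt_ofReal_mul_exp_affine_mul r a _ _ t
  rw [funext (hzc j)]
  simpa only [hzc, equivRealProdCLM_apply] using
    hvel.equivRealProdCLM_of_pointVortexVelocity (w := fun l s => c s * polygonWithCenter N ζ l)
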